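/- For a congestion game with linear latency functions f_e(x) = a_{e,1}x + a_{e,0} (non-negative coefficients), if S is a q-approximate equilibrium with q ≥ 1 and S* is any other state, then the total player cost satisfies Σ_{u∈N} Σ_{e∈s_u} (a_{e,1}·n_e(S) + a_{e,0}) ≤ q · Σ_{e∈E} (a_{e,1}·n_e(S*)·(n_e(S)+1) + a_{e,0}·n_e(S*)). -/

import Mathlib

open Finset

/-- Number of players using resource `e` at state `S`. -/
def congCount {ι ε : Type*} [Fintype ι] [DecidableEq ε]
    (S : ι → Finset ε) (e : ε) : ℕ :=
  (Finset.univ.filter fun u => e ∈ S u).card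

/-- Cost of player `u` at state `S` in a congestion game with linear latencies. -/
def linCost {ι ε : Type*} [Fintype ι] [DecidableEq ε]
    (a1 a0 : ε → ℝ) (S : ι → Finset ε) (u : ι) : ℝ :=
  ∑ e ∈ S u, (a1 e * (congCount S e : ℝ) + a0 e)

/-! Sum the approximate-equilibrium inequalities over the unilateral deviations `u ↦ Sstar u`.
A unilateral deviation raises the load of each resource by at most one, so the deviation costs
are bounded by the latencies at `S` with one extra user, and regrouping the double sum
`∑ u, ∑ e ∈ Sstar u` by resources counts each `e` exactly `n_e(Sstar)` times. -/

section

variable {ι ε : Type*} [Fintype ι] [DecidableEq ε]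

theorem congCount_update_le [DecidableEq ι] (S : ι → Finset ε) (u : ι) (s' : Finset ε)
    (e : ε) : congCount (Function.update S u s') e ≤ congCount S e + 1 := by
  unfold congCount
  calc #{v | e ∈ Function.update S u s' v}
      ≤ #(insert u ({v | e ∈ S v} : Finset ι)) := by
        refine card_le_card fun v hv => ?_
        by_cases hvu : v = u
        · simp [hvu]
        · simp_all
    _ ≤ #{v | e ∈ S v} + 1 := card_insert_le _ _

theorem sum_sum_eq_sum_congCount_nsmul [Fintype ε] {M : Type*} [AddCommMonoid M]
    (T : ι → Finset ε) (g : ε → M) :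
    ∑ u, ∑ e ∈ T u, g e = ∑ e, congCount T e • g e := by
  simp only [congCount, ← sum_const, sum_filter]
  rw [sum_comm]
  exact sum_congr rfl fun u _ => by rw [sum_ite_mem, univ_inter]

theorem linCost_update_self_le [DecidableEq ι] {a1 : ε → ℝ} (a0 : ε → ℝ) (h1 : ∀ e, 0 ≤ a1 e)
    (S : ι → Finset ε) (u : ι) (s' : Finset ε) :
    linCost a1 a0 (Function.update S u s') u ≤ ∑ e ∈ s', (a1 e * (congCount S e + 1) + a0 e) := by
  rw [linCost, Function.update_self]
  gcongr with e
  · exact h1 e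
  · exact_mod_cast congCount_update_le S u s' e

end

theorem stmt8_general {ι ε : Type*} [Fintype ι] [Fintype ε] [DecidableEq ι] [DecidableEq ε]
    (Strat : ι → Finset (Finset ε)) (a1 a0 : ε → ℝ)
    (h1 : ∀ e, 0 ≤ a1 e)
    (q : ℝ) (hq1 : 1 ≤ q)
    (S Sstar : ι → Finset ε)
    (hSstar : ∀ u, Sstar u ∈ Strat u)
    (happrox : ∀ u, ∀ s' ∈ Strat u,
      linCost a1 a0 S u ≤ q * linCost a1 a0 (Function.update S u s') u) :
    (∑ u : ι, ∑ e ∈ S u, (a1 e * (congCount S e : ℝ) + a0 e)) ≤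
      q * ∑ e : ε, (a1 e * (congCount Sstar e : ℝ) * ((congCount S e : ℝ) + 1)
        + a0 e * (congCount Sstar e : ℝ)) := by
  have hq : 0 ≤ q := zero_le_one.trans hq1
  calc ∑ u, linCost a1 a0 S u
      ≤ ∑ u, q * linCost a1 a0 (Function.update S u (Sstar u)) u :=
        sum_le_sum fun u _ => happrox u _ (hSstar u)
    _ ≤ ∑ u, q * ∑ e ∈ Sstar u, (a1 e * (congCount S e + 1) + a0 e) := by
        gcongr with u
        exact linCost_update_self_le a0 h1 S u _
    _ = q * ∑ e, (a1 e * congCount Sstar e * (congCount S e + 1) + a0 e * congCount Sstar e) := by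
        rw [← mul_sum, sum_sum_eq_sum_congCount_nsmul]
        exact congrArg (q * ·) (sum_congr rfl fun e _ => by rw [nsmul_eq_mul]; ring)

theorem stmt8 {ι ε : Type*} [Fintype ι] [Fintype ε] [DecidableEq ι] [DecidableEq ε]
    (Strat : ι → Finset (Finset ε)) (a1 a0 : ε → ℝ)
    (h1 : ∀ e, 0 ≤ a1 e) (h0 : ∀ e, 0 ≤ a0 e)
    (q : ℝ) (hq1 : 1 ≤ q)
    (S Sstar : ι → Finset ε)
    (hS : ∀ u, S u ∈ Strat u) (hSstar : ∀ u, Sstar u ∈ Strat u)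
    (happrox : ∀ u, ∀ s' ∈ Strat u,
      linCost a1 a0 S u ≤ q * linCost a1 a0 (Function.update S u s') u) :
    (∑ u : ι, ∑ e ∈ S u, (a1 e * (congCount S e : ℝ) + a0 e)) ≤
      q * ∑ e : ε, (a1 e * (congCount Sstar e : ℝ) * ((congCount S e : ℝ) + 1)
        + a0 e * (congCount Sstar e : ℝ)) :=
  stmt8_general Strat a1 a0 h1 q hq1 S Sstar hSstar happrox
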